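/- Let (A, d) be a compact metric space with tame growth of covering numbers (for every δ > 0, ε^δ log #(A, d, ε) → 0 as ε → 0). Then the shift space A^ℤ with the metric d'(x,y) = Σ_{n∈ℤ} 2^{-|n|} d(x_n, y_n) also has tame growth of covering numbers. -/

import Mathlib

/-!
Points of `A^ℤ` that are `ε/16`-close in every coordinate `|n| ≤ N` are `ε`-close for `d'` as soon
as `8 · 2^{-N} · diam A ≤ ε`, because the weights `2^{-|n|}` outside the window sum to `O(2^{-N})`.
Products of an optimal cover of `A` over the window therefore give
`#(A^ℤ, d', ε) ≤ #(A, d, ε/16)^{2N+1}` with `N = O(log (1/ε))`, so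
`log #(A^ℤ, d', ε) = O(log (1/ε)) · log #(A, d, ε/16)`, and the extra factor `log (1/ε)` is
absorbed by `ε^{δ/2}`.
-/

open Real Filter Set Topology

/-- Minimal cardinality of a cover of `𝒳` by open sets of `ρ`-diameter less than `ε`. -/
noncomputable def coverNum (𝒳 : Type*) [TopologicalSpace 𝒳] (ρ : 𝒳 → 𝒳 → ℝ) (ε : ℝ) : ℕ :=
  sInf {N : ℕ | ∃ U : Fin N → Set 𝒳, (∀ i, IsOpen (U i)) ∧ (∀ x, ∃ i, x ∈ U i) ∧
    ∀ i, ∀ x ∈ U i, ∀ y ∈ U i, ρ x y < ε}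

/-- The metric `d'(x,y) = Σ_{n ∈ ℤ} 2^{-|n|} d(x_n, y_n)` on the shift space `A^ℤ`. -/
noncomputable def dShift {A : Type*} [MetricSpace A] (x y : ℤ → A) : ℝ :=
  ∑' n : ℤ, (2 : ℝ) ^ (-|n|) * dist (x n) (y n)

theorem summable_half_pow_mul {f : ℕ → ℝ} {D : ℝ} (hf0 : ∀ n, 0 ≤ f n) (hfD : ∀ n, f n ≤ D) :
    Summable fun n ↦ (1 / 2 : ℝ) ^ n * f n :=
  .of_nonneg_of_le (fun n ↦ mul_nonneg (by positivity) (hf0 n))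
    (fun n ↦ by gcongr; exact hfD n) (summable_geometric_two.mul_right D)

theorem tsum_half_pow_mul_le {f : ℕ → ℝ} {D η : ℝ} (N : ℕ) (hf0 : ∀ n, 0 ≤ f n)
    (hfD : ∀ n, f n ≤ D) (hη : 0 ≤ η) (hfη : ∀ n < N, f n ≤ η) :
    ∑' n, (1 / 2 : ℝ) ^ n * f n ≤ 2 * η + 2 * (1 / 2) ^ N * D := by
  have hsum := summable_half_pow_mul hf0 hfD
  rw [← hsum.sum_add_tsum_nat_add N]
  gcongr
  · calc ∑ i ∈ Finset.range N, (1 / 2 : ℝ) ^ i * f i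
        ≤ ∑ i ∈ Finset.range N, (1 / 2 : ℝ) ^ i * η :=
          Finset.sum_le_sum fun i hi ↦ by gcongr; exact hfη i (Finset.mem_range.1 hi)
      _ ≤ 2 * η := by rw [← Finset.sum_mul]; gcongr; exact sum_geometric_two_le N
  · calc ∑' i, (1 / 2 : ℝ) ^ (i + N) * f (i + N)
        ≤ ∑' i, (1 / 2 : ℝ) ^ (i + N) * D :=
          (hsum.comp_injective (add_left_injective N)).tsum_le_tsum (fun i ↦ by gcongr; exact hfD _)
            ((summable_geometric_two.mul_right _).comp_injective (add_left_injective N))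
      _ = 2 * (1 / 2) ^ N * D := by
          simp_rw [pow_add, mul_assoc, tsum_mul_right, tsum_geometric_two]

theorem dShift_le {A : Type*} [MetricSpace A] {x y : ℤ → A} {D η : ℝ} (N : ℕ)
    (hD : ∀ n, dist (x n) (y n) ≤ D) (hη : 0 ≤ η) (hN : ∀ n : ℤ, |n| ≤ N → dist (x n) (y n) ≤ η) :
    dShift x y ≤ 4 * η + 4 * (1 / 2) ^ N * D := by
  have hweight_nat : ∀ n : ℕ, (2 : ℝ) ^ (-|(n : ℤ)|) = (1 / 2) ^ n := fun n ↦ by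
    simp [zpow_neg, inv_pow]
  have hweight_neg : ∀ n : ℕ, (2 : ℝ) ^ (-|-((n : ℤ) + 1)|) = (1 / 2) ^ n * (1 / 2) := fun n ↦ by
    rw [abs_neg, abs_of_nonneg (by positivity), zpow_neg, ← pow_succ, one_div, inv_pow]
    norm_cast
  have hD_nat (n : ℕ) : dist (x n) (y n) ≤ D := hD n
  have hD_neg (n : ℕ) : dist (x (-(n + 1))) (y (-(n + 1))) ≤ D := hD _
  have hnat_le := tsum_half_pow_mul_le N (fun n ↦ dist_nonneg) hD_nat hη
    (fun n hn ↦ hN n (by simp; omega))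
  have hneg_le := tsum_half_pow_mul_le N (fun n ↦ dist_nonneg) hD_neg hη
    (fun n hn ↦ hN _ (by rw [abs_neg]; norm_cast))
  have hneg_nonneg : 0 ≤ ∑' n : ℕ, (1 / 2 : ℝ) ^ n * dist (x (-(n + 1))) (y (-(n + 1))) :=
    tsum_nonneg fun n ↦ mul_nonneg (by positivity) dist_nonneg
  rw [dShift, tsum_of_nat_of_neg_add_one]
  · simp_rw [hweight_nat, hweight_neg, mul_right_comm _ (1 / 2 : ℝ), tsum_mul_right]
    linarith
  · simpa only [hweight_nat] using summable_half_pow_mul (fun n ↦ dist_nonneg) hD_nat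
  · simpa only [hweight_neg, mul_right_comm _ (1 / 2 : ℝ)] using
      (summable_half_pow_mul (fun n ↦ dist_nonneg) hD_neg).mul_right (1 / 2)

theorem exists_fin_cover_of_cover {X ι : Type*} [TopologicalSpace X] [Fintype ι]
    {ρ : X → X → ℝ} {ε : ℝ} (U : ι → Set X) (hU : ∀ i, IsOpen (U i))
    (hcover : ∀ x, ∃ i, x ∈ U i) (hsmall : ∀ i, ∀ x ∈ U i, ∀ y ∈ U i, ρ x y < ε) :
    Fintype.card ι ∈ {N : ℕ | ∃ V : Fin N → Set X, (∀ i, IsOpen (V i)) ∧ (∀ x, ∃ i, x ∈ V i) ∧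
      ∀ i, ∀ x ∈ V i, ∀ y ∈ V i, ρ x y < ε} := by
  refine ⟨U ∘ (Fintype.equivFin ι).symm, fun j ↦ hU _, fun x ↦ ?_, fun j ↦ hsmall _⟩
  obtain ⟨i, hi⟩ := hcover x
  exact ⟨Fintype.equivFin ι i, by simpa using hi⟩

theorem coverNum_le_card {X ι : Type*} [TopologicalSpace X] [Fintype ι] {ρ : X → X → ℝ} {ε : ℝ}
    (U : ι → Set X) (hU : ∀ i, IsOpen (U i)) (hcover : ∀ x, ∃ i, x ∈ U i)
    (hsmall : ∀ i, ∀ x ∈ U i, ∀ y ∈ U i, ρ x y < ε) :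
    coverNum X ρ ε ≤ Fintype.card ι :=
  Nat.sInf_le (exists_fin_cover_of_cover U hU hcover hsmall)

theorem exists_cover_card_coverNum (A : Type*) [PseudoMetricSpace A] [CompactSpace A] {ε : ℝ}
    (hε : 0 < ε) :
    ∃ U : Fin (coverNum A dist ε) → Set A, (∀ i, IsOpen (U i)) ∧ (∀ x, ∃ i, x ∈ U i) ∧
      ∀ i, ∀ x ∈ U i, ∀ y ∈ U i, dist x y < ε := by
  obtain ⟨t, -, ht, hcover⟩ := finite_cover_balls_of_compact (isCompact_univ (X := A)) (half_pos hε)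
  have := ht.fintype
  have hcover' (x : A) : ∃ a : t, x ∈ Metric.ball (a : A) (ε / 2) := by
    obtain ⟨a, ha, hxa⟩ := mem_iUnion₂.1 (hcover (mem_univ x))
    exact ⟨⟨a, ha⟩, hxa⟩
  have hsmall (a : t) : ∀ x ∈ Metric.ball (a : A) (ε / 2), ∀ y ∈ Metric.ball (a : A) (ε / 2),
      dist x y < ε := fun x hx y hy ↦
    calc dist x y ≤ dist x a + dist y a := dist_triangle_right _ _ _
      _ < ε / 2 + ε / 2 := add_lt_add hx hy
      _ = ε := add_halves ε
  exact Nat.sInf_mem ⟨_, exists_fin_cover_of_cover _ (fun _ ↦ Metric.isOpen_ball) hcover' hsmall⟩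

theorem coverNum_pi_le_pow {ι A : Type*} [PseudoMetricSpace A] [CompactSpace A]
    {ρ : (ι → A) → (ι → A) → ℝ} (s : Finset ι) {η ε : ℝ} (hη : 0 < η)
    (hρ : ∀ x y, (∀ i ∈ s, dist (x i) (y i) < η) → ρ x y < ε) :
    coverNum (ι → A) ρ ε ≤ coverNum A dist η ^ s.card := by
  classical
  obtain ⟨U, hU, hcover, hsmall⟩ := exists_cover_card_coverNum A hη
  have hcard : Fintype.card (s → Fin (coverNum A dist η)) = coverNum A dist η ^ s.card := by
    simp
  rw [← hcard]
  refine coverNum_le_card (fun c ↦ {x | ∀ i : s, x i ∈ U (c i)}) (fun c ↦ ?_)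
    (fun x ↦ ⟨fun i ↦ (hcover (x i)).choose, fun i ↦ (hcover (x i)).choose_spec⟩)
    (fun c x hx y hy ↦ hρ x y fun i hi ↦ hsmall _ _ (hx ⟨i, hi⟩) _ (hy ⟨i, hi⟩))
  simp only [Set.ofPred_forall]
  exact isOpen_iInter_of_finite fun i : s ↦ (hU (c i)).preimage (continuous_apply (i : ι))

theorem coverNum_shift_le {A : Type*} [MetricSpace A] [CompactSpace A] {ε : ℝ} (hε : 0 < ε)
    (N : ℕ) (hN : 8 * (1 / 2) ^ N * Metric.diam (univ : Set A) ≤ ε) :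
    coverNum (ℤ → A) dShift ε ≤ coverNum A dist (ε / 16) ^ (2 * N + 1) := by
  have hcard : (Finset.Icc (-N : ℤ) N).card = 2 * N + 1 := by simp; omega
  rw [← hcard]
  refine coverNum_pi_le_pow _ (by positivity) fun x y hxy ↦ ?_
  have hD (n : ℤ) : dist (x n) (y n) ≤ Metric.diam (univ : Set A) :=
    Metric.dist_le_diam_of_mem Metric.isBounded_of_compactSpace (mem_univ _) (mem_univ _)
  have := dShift_le N hD (by positivity)
    fun n hn ↦ (hxy n (Finset.mem_Icc.2 (abs_le.1 hn))).le
  linarith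

theorem log_coverNum_shift_le {A : Type*} [MetricSpace A] [CompactSpace A] {ε : ℝ} (hε : 0 < ε)
    (N : ℕ) (hN : 8 * (1 / 2) ^ N * Metric.diam (univ : Set A) ≤ ε) :
    Real.log (coverNum (ℤ → A) dShift ε) ≤ (2 * N + 1) * Real.log (coverNum A dist (ε / 16)) := by
  rcases (coverNum (ℤ → A) dShift ε).eq_zero_or_pos with h | h
  · rw [h, Nat.cast_zero, Real.log_zero]
    exact mul_nonneg (by positivity) (Real.log_natCast_nonneg _)
  · calc Real.log (coverNum (ℤ → A) dShift ε)
        ≤ Real.log ((coverNum A dist (ε / 16) ^ (2 * N + 1) : ℕ) : ℝ) :=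
          Real.log_le_log (by exact_mod_cast h) (by exact_mod_cast coverNum_shift_le hε N hN)
      _ = (2 * N + 1) * Real.log (coverNum A dist (ε / 16)) := by
          push_cast; rw [Real.log_pow]; push_cast; ring

def TameGrowth (f : ℝ → ℝ) : Prop :=
  ∀ δ : ℝ, 0 < δ → Tendsto (fun ε : ℝ ↦ ε ^ δ * f ε) (𝓝[>] 0) (𝓝 0)

namespace TameGrowth

variable {f g : ℝ → ℝ}

theorem add (hf : TameGrowth f) (hg : TameGrowth g) : TameGrowth fun ε ↦ f ε + g ε := fun δ hδ ↦ by
  simpa only [mul_add, add_zero] using (hf δ hδ).add (hg δ hδ)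

theorem const_mul (c : ℝ) (hf : TameGrowth f) : TameGrowth fun ε ↦ c * f ε := fun δ hδ ↦ by
  simpa only [mul_left_comm _ c, mul_zero] using (hf δ hδ).const_mul c

theorem comp_div (hf : TameGrowth f) {c : ℝ} (hc : 0 < c) : TameGrowth fun ε ↦ f (ε / c) := by
  intro δ hδ
  have hdiv : Tendsto (fun ε : ℝ ↦ ε / c) (𝓝[>] 0) (𝓝[>] 0) :=
    tendsto_nhdsWithin_of_tendsto_nhds_of_eventually_within _
      (((continuous_id.div_const c).tendsto' 0 0 (zero_div c)).mono_left nhdsWithin_le_nhds)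
      (eventually_nhdsWithin_of_forall fun ε hε ↦ div_pos hε hc)
  have := ((hf δ hδ).comp hdiv).const_mul (c ^ δ)
  rw [mul_zero] at this
  refine this.congr' (eventually_nhdsWithin_of_forall fun ε (hε : 0 < ε) ↦ ?_)
  simp only [Function.comp_apply, ← mul_assoc, ← Real.mul_rpow hc.le (div_pos hε hc).le,
    mul_div_cancel₀ ε hc.ne']

theorem log_mul (hf : TameGrowth f) : TameGrowth fun ε ↦ Real.log ε * f ε := by
  intro δ hδ
  have := (tendsto_log_mul_rpow_nhdsGT_zero (half_pos hδ)).mul (hf (δ / 2) (half_pos hδ))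
  rw [mul_zero] at this
  refine this.congr' (eventually_nhdsWithin_of_forall fun ε (hε : 0 < ε) ↦ ?_)
  have hsplit : ε ^ δ = ε ^ (δ / 2) * ε ^ (δ / 2) := by rw [← Real.rpow_add hε, add_halves]
  simp only [hsplit]
  ring

theorem of_le (hf : TameGrowth f) (hg0 : ∀ᶠ ε in 𝓝[>] 0, 0 ≤ g ε)
    (hgf : ∀ᶠ ε in 𝓝[>] 0, g ε ≤ f ε) : TameGrowth g := by
  intro δ hδ
  have hpos : ∀ᶠ ε : ℝ in 𝓝[>] 0, 0 < ε := eventually_nhdsWithin_of_forall fun ε hε ↦ hε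
  refine squeeze_zero' ?_ ?_ (hf δ hδ)
  · filter_upwards [hpos, hg0] with ε hε h0 using mul_nonneg (Real.rpow_nonneg hε.le δ) h0
  · filter_upwards [hpos, hgf] with ε hε hle using
      mul_le_mul_of_nonneg_left hle (Real.rpow_nonneg hε.le δ)

end TameGrowth

theorem half_pow_ceil_logb_div_le {C ε : ℝ} (hC : 0 < C) (hε : 0 < ε) :
    (1 / 2 : ℝ) ^ ⌈Real.logb 2 (C / ε)⌉₊ ≤ ε / C := by
  rw [one_div, inv_pow, ← inv_div C ε]
  refine inv_anti₀ (div_pos hC hε) ?_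
  calc C / ε = 2 ^ Real.logb 2 (C / ε) :=
        (Real.rpow_logb two_pos (by norm_num) (div_pos hC hε)).symm
    _ ≤ 2 ^ (⌈Real.logb 2 (C / ε)⌉₊ : ℝ) :=
      Real.rpow_le_rpow_of_exponent_le one_le_two (Nat.le_ceil _)
    _ = 2 ^ ⌈Real.logb 2 (C / ε)⌉₊ := Real.rpow_natCast _ _

theorem natCeil_logb_div_le {b C ε : ℝ} (hb : 1 < b) (hε : 0 < ε) (hεC : ε ≤ C) :
    (⌈Real.logb b (C / ε)⌉₊ : ℝ) ≤ (Real.log C - Real.log ε) / Real.log b + 1 := by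
  have hlogb : 0 ≤ Real.logb b (C / ε) := Real.logb_nonneg hb ((one_le_div hε).2 hεC)
  rw [← Real.log_div (hε.trans_le hεC).ne' hε.ne']
  exact (Nat.ceil_lt_add_one hlogb).le

/-- If a compact metric space `(A, d)` has tame growth of covering numbers, then so does
the shift space `(A^ℤ, d')`. -/
theorem shift_space_tame_growth {A : Type*} [MetricSpace A] [CompactSpace A]
    (htame : ∀ δ : ℝ, 0 < δ →
      Tendsto (fun ε : ℝ => ε ^ δ * Real.log (coverNum A dist ε)) (𝓝[>] (0 : ℝ)) (𝓝 0)) :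
    ∀ δ : ℝ, 0 < δ →
      Tendsto (fun ε : ℝ => ε ^ δ * Real.log (coverNum (ℤ → A) dShift ε))
        (𝓝[>] (0 : ℝ)) (𝓝 0) := by
  show TameGrowth fun ε ↦ Real.log (coverNum (ℤ → A) dShift ε)
  set D := Metric.diam (univ : Set A)
  set C := 8 * D + 1
  have hC : 0 < C := by positivity
  have hN (ε : ℝ) (hε : 0 < ε) : 8 * (1 / 2) ^ ⌈Real.logb 2 (C / ε)⌉₊ * D ≤ ε := by
    calc 8 * (1 / 2) ^ ⌈Real.logb 2 (C / ε)⌉₊ * D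
        ≤ 8 * (ε / C) * D := by gcongr; exact half_pow_ceil_logb_div_le hC hε
      _ = ε * (8 * D / C) := by ring
      _ ≤ ε := mul_le_of_le_one_right hε.le ((div_le_one hC).2 (by linarith))
  have hA : TameGrowth fun ε ↦ Real.log (coverNum A dist (ε / 16)) :=
    TameGrowth.comp_div (f := fun ε ↦ Real.log (coverNum A dist ε)) htame (by norm_num)
  have hmajor := (hA.const_mul (2 * Real.log C / Real.log 2 + 3)).add
    (hA.log_mul.const_mul (-(2 / Real.log 2)))
  refine hmajor.of_le (Eventually.of_forall fun ε ↦ Real.log_natCast_nonneg _) ?_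
  filter_upwards [Ioo_mem_nhdsGT hC] with ε ⟨hε, hεC⟩
  calc Real.log (coverNum (ℤ → A) dShift ε)
      ≤ (2 * ⌈Real.logb 2 (C / ε)⌉₊ + 1) * Real.log (coverNum A dist (ε / 16)) :=
        log_coverNum_shift_le hε _ (hN ε hε)
    _ ≤ (2 * ((Real.log C - Real.log ε) / Real.log 2 + 1) + 1) *
          Real.log (coverNum A dist (ε / 16)) := by
        gcongr
        exact natCeil_logb_div_le one_lt_two hε hεC.le
    _ = _ := by ring
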